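/- arXiv:2001.03832 — 2 statements merged into one kernel-verified Lean document; each statement's English description precedes it below -/
import Mathlib

section
/- For a nonempty index 𝐤=(k₁,…,k_r) and any integer j ≥ 0, the following identity holds in ℛ: Σ_{i=1}^{r} [ (j+1+k_i, k_{i+1},…,k_r, k₁,…,k_{i−1}) + (j+1, k_i, k_{i+1},…,k_r, k₁,…,k_{i−1}) ] = Σ_{m=0}^{r−1} (−1)^m Σ_{i=1}^{r−m} Σ_{(l₁,…,l_{r−m}) ∈ S_m(𝐤)} (j+1, l_{i+1},…,l_{r−m}, l₁,…,l_i)⋆. -/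
/-- `ℛ`, the free `ℚ`-vector space on the set of indices (realized as lists of naturals;
indices are the lists all of whose entries are positive). -/
abbrev RSp : Type := List ℕ →₀ ℚ

/-- Merge an interleaved sequence `a □ b₁ □ b₂ ⋯`: a `true` separator is a plus sign
(the adjacent entries are added together), a `false` separator is a comma. -/
def mergeP : ℕ → List (Bool × ℕ) → List ℕ
  | a, [] => [a]
  | a, (true, b) :: rest => mergeP (a + b) rest
  | a, (false, b) :: rest => a :: mergeP b rest

/-- `𝐤⋆ ∈ ℛ`: the sum over all `2^{r−1}` comma/plus patterns of the merged index. -/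
noncomputable def starIdx : List ℕ → RSp
  | [] => 0
  | a :: rest =>
      ∑ s : Fin rest.length → Bool,
        Finsupp.single (mergeP a ((List.ofFn s).zip rest)) (1 : ℚ)

/-- The sum, over all comma/plus patterns of `𝐤` with exactly `m` plus signs,
of `(merged index)⋆ ∈ ℛ`. -/
noncomputable def starIdxM : List ℕ → ℕ → RSp
  | [], _ => 0
  | a :: rest, m =>
      ∑ s : Fin rest.length → Bool,
        if (List.ofFn s).count true = m then starIdx (mergeP a ((List.ofFn s).zip rest)) else 0

/-- The sum, over all comma/plus patterns of `𝐤` with exactly `m` plus signs,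
of the merged index, as an element of `ℛ`. -/
noncomputable def mergeM : List ℕ → ℕ → RSp
  | [], _ => 0
  | a :: rest, m =>
      ∑ s : Fin rest.length → Bool,
        if (List.ofFn s).count true = m then
          Finsupp.single (mergeP a ((List.ofFn s).zip rest)) (1 : ℚ) else 0

/-- Given a cyclic comma/plus pattern `s` on `𝐤` (`s[i]` sits between the `i`-th and the
`(i+1)`-st entry, cyclically) having at least one comma, merge the cyclically adjacent
entries joined by plus signs, reading the cycle linearly starting right after the first
comma (this fixes a choice of cyclic rotation of the merged index). -/
def cycMerge (K : List ℕ) (s : List Bool) : List ℕ :=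
  match K.rotate (s.idxOf false + 1) with
  | [] => []
  | a :: rest => mergeP a ((s.rotate (s.idxOf false + 1)).zip rest)

/-- `S_m(𝐤) ∈ ℛ`: the sum, over all cyclic comma/plus patterns of `𝐤` with exactly `m`
plus signs, of (a chosen cyclic rotation of) the cyclically merged index. -/
noncomputable def SmDef (K : List ℕ) (m : ℕ) : RSp :=
  ∑ s : Fin K.length → Bool,
    if (List.ofFn s).count true = m then
      Finsupp.single (cycMerge K (List.ofFn s)) (1 : ℚ) else 0

/-- For `M = Σ_𝐤 c_𝐤·𝐤 ∈ ℛ`, the weighted sum `Σ_{𝐤 ∈ M} f(𝐤) := Σ_𝐤 c_𝐤 • f(𝐤)`;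
here used with `M = S_m(𝐤)`, giving the notation `Σ_{(l₁,…,l_{r−m}) ∈ S_m(𝐤)} f(l)`. -/
noncomputable def Ssum (K : List ℕ) (m : ℕ) (f : List ℕ → RSp) : RSp :=
  Finsupp.sum (SmDef K m) fun l c => c • f l

/-!
Expanding `S_m(𝐤)` over cyclic comma/plus patterns `s`, the `r − m` rotations of the
merged index are exactly the linear indices obtained by opening the cycle at each of the
`r − m` commas of `s`. Exchanging sums, the right-hand side becomes a sum over the comma `c`
at which the cycle is opened of an alternating sum over the remaining `r − 1` separators.
Since `(w, l₁, l₂, …)⋆ = (w + l₁, l₂, …)⋆ + (w, (l₁, l₂, …)⋆)`, that alternating sum is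
computed by Möbius inversion on the Boolean lattice of linear patterns,
`Σ_q (−1)^{#plus(q)} (merge_q 𝐤)⋆ = 𝐤`, and only the two terms `(w + k_c, …) + (w, k_c, …)`
of the left-hand side survive.
-/

open Finset

section PiFinSums

variable {α M : Type*} [Fintype α] [AddCommMonoid M]

theorem sum_pi_fin_succ {n : ℕ} (f : (Fin (n + 1) → α) → M) :
    ∑ s, f s = ∑ a, ∑ s : Fin n → α, f (Fin.cons a s) := by
  rw [← (Fin.consEquiv fun _ => α).sum_comp, Fintype.sum_prod_type]
  rfl

theorem sum_pi_fin_snoc {n : ℕ} (f : (Fin (n + 1) → α) → M) :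
    ∑ s, f s = ∑ a, ∑ s : Fin n → α, f (Fin.snoc s a) := by
  rw [← (Fin.snocEquiv fun _ => α).sum_comp, Fintype.sum_prod_type]
  rfl

theorem exists_bijective_ofFn_rotate (n c : ℕ) :
    ∃ e : (Fin n → α) → Fin n → α,
      e.Bijective ∧ ∀ s, List.ofFn (e s) = (List.ofFn s).rotate c := by
  refine ⟨fun s i => ((List.ofFn s).rotate c)[i]'(by simp), Function.Injective.bijective_of_finite
    fun s t hst => ?_, fun s => List.ext_getElem (by simp) fun i _ _ => by simp⟩
  refine List.ofFn_injective ((List.rotate_eq_rotate (n := c)).mp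
    (List.ext_getElem (by simp) fun i hi _ => ?_))
  simpa using congrFun hst ⟨i, by simpa using hi⟩

end PiFinSums

theorem List.ofFn_snoc {α : Type*} {n : ℕ} (s : Fin n → α) (a : α) :
    List.ofFn (Fin.snoc s a : Fin (n + 1) → α) = List.ofFn s ++ [a] := by
  rw [List.ofFn_succ']
  simp

theorem List.rotate_add_length {α : Type*} (l : List α) (n : ℕ) :
    l.rotate (n + l.length) = l.rotate n := by
  rw [← l.rotate_mod, Nat.add_mod_right, l.rotate_mod]

theorem List.getLast?_rotate_succ {α : Type*} {l : List α} {c : ℕ} (hc : c < l.length) :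
    (l.rotate (c + 1)).getLast? = l[c]? := by
  rw [List.getLast?_eq_getElem?, List.length_rotate, List.getElem?_rotate (by omega),
    show l.length - 1 + (c + 1) = c + l.length by omega, Nat.add_mod_right, Nat.mod_eq_of_lt hc]

theorem List.zip_append_of_length_eq {α β : Type*} {t : List α} (u : List α) {r : List β}
    (h : t.length = r.length) : (t ++ u).zip r = t.zip r := by
  simpa using List.zip_append (r₁ := u) (r₂ := []) h

theorem List.exists_eq_append_cons_of_getElem?_eq_some {α : Type*} {l : List α} {c : ℕ} {x : α}
    (h : l[c]? = some x) : ∃ l₁ l₂, l = l₁ ++ x :: l₂ ∧ l₁.length = c := by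
  obtain ⟨hc, rfl⟩ := List.getElem?_eq_some_iff.mp h
  exact ⟨l.take c, l.drop (c + 1), by rw [← List.drop_eq_getElem_cons, List.take_append_drop],
    by simp [hc.le]⟩

theorem sum_occurrences_count_take {α M : Type*} [DecidableEq α] [AddCommMonoid M]
    (l : List α) (a : α) (f : ℕ → M) :
    ∑ c ∈ range l.length with l[c]? = some a, f ((l.take (c + 1)).count a)
      = ∑ i ∈ range (l.count a), f (i + 1) := by
  induction l generalizing f with
  | nil => simp
  | cons b l ih =>
    rw [sum_filter, List.length_cons, sum_range_succ']
    simp only [List.getElem?_cons_succ, List.getElem?_cons_zero, List.take_succ_cons,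
      List.count_cons, beq_iff_eq, Option.some.injEq, List.take_zero, List.count_nil]
    by_cases hb : b = a
    · simp only [hb, if_true, Nat.zero_add, ← sum_filter, ih fun i => f (i + 1), sum_range_succ']
    · simp only [hb, if_false, add_zero, ← sum_filter, ih]

theorem sum_range_succ_of_periodic {M : Type*} [AddCommMonoid M] {H : ℕ → M} {r : ℕ}
    (hH : Function.Periodic H r) : ∑ c ∈ range r, H (c + 1) = ∑ c ∈ range r, H c := by
  cases r with
  | zero => rfl
  | succ n => rw [sum_range_succ, hH.eq, sum_range_succ' H]

theorem sum_range_add_of_periodic {M : Type*} [AddCommMonoid M] {H : ℕ → M} {r : ℕ}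
    (hH : Function.Periodic H r) (ρ : ℕ) :
    ∑ c ∈ range r, H (c + ρ) = ∑ c ∈ range r, H c := by
  induction ρ generalizing H with
  | zero => rfl
  | succ ρ ih =>
    simp_rw [← Nat.add_assoc]
    rw [ih (H := fun c => H (c + 1)) fun c => by simp only [Nat.add_right_comm c r 1, hH (c + 1)],
      sum_range_succ_of_periodic hH]

theorem sum_range_eq_sum_Icc {M : Type*} [AddCommMonoid M] (f : ℕ → M) (n : ℕ) :
    ∑ i ∈ range n, f (i + 1) = ∑ i ∈ Icc 1 n, f i := by
  rw [range_eq_Ico, sum_Ico_add' f, Nat.zero_add, Ico_add_one_right_eq_Icc]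

theorem mergeP_length (a : ℕ) (L : List (Bool × ℕ)) :
    (mergeP a L).length = (L.map Prod.fst).count false + 1 := by
  induction L generalizing a with
  | nil => rfl
  | cons p L ih =>
    obtain ⟨_ | _, x⟩ := p <;> simp [mergeP, ih]

theorem mergeP_ne_nil (a : ℕ) (L : List (Bool × ℕ)) : mergeP a L ≠ [] :=
  List.ne_nil_of_length_pos (by simp [mergeP_length])

theorem modifyHead_mergeP (w a : ℕ) (L : List (Bool × ℕ)) :
    (mergeP a L).modifyHead (w + ·) = mergeP (w + a) L := by
  induction L generalizing a with
  | nil => rfl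
  | cons p L ih =>
    obtain ⟨_ | _, x⟩ := p
    · rfl
    · simp only [mergeP, ih, Nat.add_assoc]

theorem mergeP_append_false_cons (a b : ℕ) (L₁ L₂ : List (Bool × ℕ)) :
    mergeP a (L₁ ++ (false, b) :: L₂) = mergeP a L₁ ++ mergeP b L₂ := by
  induction L₁ generalizing a with
  | nil => rfl
  | cons p L₁ ih =>
    obtain ⟨_ | _, x⟩ := p <;> simp [mergeP, ih]

theorem starIdx_cons_of_ne_nil (w : ℕ) {l : List ℕ} (hl : l ≠ []) :
    starIdx (w :: l)
      = starIdx (l.modifyHead (w + ·)) + Finsupp.mapDomain (List.cons w) (starIdx l) := by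
  obtain ⟨x, xs, rfl⟩ := List.exists_cons_of_ne_nil hl
  rw [starIdx, List.length_cons, sum_pi_fin_succ, Fintype.sum_bool]
  simp only [List.ofFn_cons, List.zip_cons_cons, mergeP, List.modifyHead_cons, starIdx,
    Finsupp.mapDomain_finsetSum, Finsupp.mapDomain_single]

theorem starIdx_cons_mergeP (w a : ℕ) (L : List (Bool × ℕ)) :
    starIdx (w :: mergeP a L)
      = starIdx (mergeP (w + a) L) + Finsupp.mapDomain (List.cons w) (starIdx (mergeP a L)) := by
  rw [starIdx_cons_of_ne_nil w (mergeP_ne_nil a L), modifyHead_mergeP]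

theorem sum_neg_one_pow_smul_starIdx_mergeP (a : ℕ) (rest : List ℕ) :
    ∑ q : Fin rest.length → Bool, (-1 : ℚ) ^ (List.ofFn q).count true •
        starIdx (mergeP a ((List.ofFn q).zip rest)) = Finsupp.single (a :: rest) 1 := by
  induction rest generalizing a with
  | nil => simp [mergeP, starIdx]
  | cons b rest ih =>
    rw [List.length_cons, sum_pi_fin_succ, Fintype.sum_bool, ← sum_add_distrib]
    simp only [List.ofFn_cons, List.count_cons_self, List.count_cons_of_ne Bool.false_ne_true,
      List.zip_cons_cons, mergeP, starIdx_cons_mergeP, pow_succ, mul_neg_one, neg_smul, smul_add,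
      neg_add_cancel_left, ← Finsupp.mapDomain_smul, ← Finsupp.mapDomain_finsetSum, ih,
      Finsupp.mapDomain_single]

theorem sum_neg_one_pow_smul_starIdx_cons_mergeP (w a : ℕ) (rest : List ℕ) :
    ∑ q : Fin rest.length → Bool, (-1 : ℚ) ^ (List.ofFn q).count true •
        starIdx (w :: mergeP a ((List.ofFn q).zip rest))
      = Finsupp.single ((w + a) :: rest) 1 + Finsupp.single (w :: a :: rest) 1 := by
  simp only [starIdx_cons_mergeP, smul_add, sum_add_distrib, ← Finsupp.mapDomain_smul,
    ← Finsupp.mapDomain_finsetSum, sum_neg_one_pow_smul_starIdx_mergeP, Finsupp.mapDomain_single]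

/-- The last separator of `s` is the one closing the cycle; `zip` drops it. -/
def openMerge : List ℕ → List Bool → List ℕ
  | [], _ => []
  | a :: rest, s => mergeP a (s.zip rest)

theorem cycMerge_eq_openMerge (K : List ℕ) (s : List Bool) :
    cycMerge K s = openMerge (K.rotate (s.idxOf false + 1)) (s.rotate (s.idxOf false + 1)) := by
  unfold cycMerge
  cases K.rotate (s.idxOf false + 1) <;> rfl

theorem length_mergeP_zip (a : ℕ) {t : List Bool} {rest : List ℕ} (h : t.length = rest.length) :
    (mergeP a (t.zip rest)).length = (t ++ [false]).count false := by
  simp [mergeP_length, List.map_fst_zip h.le]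

theorem openMerge_rotate_of_eq_append (a y : ℕ) {tX tY : List Bool} {rX rY : List ℕ}
    (hX : tX.length = rX.length) (hY : tY.length = rY.length) :
    openMerge ((a :: (rX ++ y :: rY)).rotate (tX.length + 1))
        ((tX ++ false :: tY ++ [false]).rotate (tX.length + 1))
      = (mergeP a ((tX ++ false :: tY).zip (rX ++ y :: rY))).rotate
          (mergeP a (tX.zip rX)).length := by
  rw [List.zip_append hX, List.zip_cons_cons, mergeP_append_false_cons,
    List.rotate_append_length_eq, show a :: (rX ++ y :: rY) = (a :: rX) ++ y :: rY from rfl, hX,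
    show rX.length + 1 = (a :: rX).length from rfl, List.rotate_append_length_eq,
    show tX ++ false :: tY ++ [false] = (tX ++ [false]) ++ (tY ++ [false]) by simp,
    show (a :: rX).length = (tX ++ [false]).length by simp [hX], List.rotate_append_length_eq]
  show mergeP y (((tY ++ [false]) ++ (tX ++ [false])).zip (rY ++ a :: rX)) = _
  rw [List.append_assoc, List.singleton_append, List.zip_append hY, List.zip_cons_cons,
    List.zip_append_of_length_eq _ hX, mergeP_append_false_cons]

theorem openMerge_rotate_succ (a : ℕ) {rest : List ℕ} {t : List Bool}
    (hlen : t.length = rest.length) {c : ℕ} (hc : (t ++ [false])[c]? = some false) :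
    openMerge ((a :: rest).rotate (c + 1)) ((t ++ [false]).rotate (c + 1))
      = (mergeP a (t.zip rest)).rotate (((t ++ [false]).take (c + 1)).count false) := by
  obtain ⟨hc', -⟩ := List.getElem?_eq_some_iff.mp hc
  rcases (show c < t.length ∨ c = t.length by simp at hc'; omega) with hlt | rfl
  · rw [List.getElem?_append_left hlt] at hc
    obtain ⟨tX, tY, rfl, rfl⟩ := List.exists_eq_append_cons_of_getElem?_eq_some hc
    obtain ⟨rX, rY, hrest, hX⟩ := List.exists_eq_append_cons_of_getElem?_eq_some
      (List.getElem?_eq_getElem (show tX.length < rest.length by simp at hlen; omega))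
    generalize rest[tX.length] = y at hrest
    subst hrest
    have hY : tY.length = rY.length := by simp at hlen; omega
    have hcount : ((tX ++ false :: tY ++ [false]).take (tX.length + 1)).count false
        = (mergeP a (tX.zip rX)).length := by
      rw [length_mergeP_zip a hX.symm, List.append_assoc, List.take_append,
        List.take_of_length_le (by simp)]
      simp
    rw [hcount]
    exact openMerge_rotate_of_eq_append a y hX.symm hY
  · have hK : (a :: rest).rotate (t.length + 1) = a :: rest := by
      rw [hlen]; exact List.rotate_length _
    have hs : (t ++ [false]).rotate (t.length + 1) = t ++ [false] := by
      simpa using List.rotate_length (t ++ [false])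
    rw [hK, hs, List.take_of_length_le (by simp), ← length_mergeP_zip a hlen, List.rotate_length]
    simp [openMerge, List.zip_append_of_length_eq _ hlen]

section Cyclic

variable {M : Type*} [AddCommMonoid M] (G : List ℕ → M)

/-- `(s.rotate c).getLast?` is the separator in front of the `c`-th entry, so this sums `G` over
the linear indices obtained by opening the cycle at each comma of `s`. -/
noncomputable def cutSum (K : List ℕ) (s : List Bool) : M :=
  ∑ c ∈ range K.length, if (s.rotate c).getLast? = some false then
    G (openMerge (K.rotate c) (s.rotate c)) else 0

theorem cutSum_rotate (K : List ℕ) {s : List Bool} (hs : s.length = K.length) (ρ : ℕ) :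
    cutSum G (K.rotate ρ) (s.rotate ρ) = cutSum G K s := by
  have hH : Function.Periodic (fun c => if (s.rotate c).getLast? = some false then
      G (openMerge (K.rotate c) (s.rotate c)) else 0) K.length := fun c => by
    simp only [List.rotate_add_length K]
    rw [← hs, List.rotate_add_length]
  simpa only [cutSum, List.length_rotate, List.rotate_rotate, Nat.add_comm ρ] using
    sum_range_add_of_periodic hH ρ

theorem cutSum_cons_append_false (a : ℕ) {rest : List ℕ} {t : List Bool}
    (hlen : t.length = rest.length) :
    cutSum G (a :: rest) (t ++ [false])
      = ∑ i ∈ Icc 1 ((t ++ [false]).count false), G ((mergeP a (t.zip rest)).rotate i) := by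
  have hlen' : (t ++ [false]).length = (a :: rest).length := by simp [hlen]
  rw [← cutSum_rotate G _ hlen' 1, cutSum, List.length_rotate, ← hlen',
    ← sum_range_eq_sum_Icc,
    ← sum_occurrences_count_take _ _ fun i => G ((mergeP a (t.zip rest)).rotate i), sum_filter]
  refine sum_congr rfl fun c hc => ?_
  simp only [List.rotate_rotate, Nat.add_comm 1 c]
  rw [List.getLast?_rotate_succ (mem_range.mp hc)]
  split_ifs with h
  · rw [openMerge_rotate_succ a hlen h]
  · rfl

theorem cutSum_eq_sum_Icc_cycMerge (K : List ℕ) {s : List Bool} (hs : s.length = K.length)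
    (hf : false ∈ s) :
    cutSum G K s = ∑ i ∈ Icc 1 (s.count false), G ((cycMerge K s).rotate i) := by
  set ρ := s.idxOf false + 1
  have hlast : (s.rotate ρ).getLast? = some false := by
    rw [List.getLast?_rotate_succ (List.idxOf_lt_length_of_mem hf), List.getElem?_idxOf hf]
  obtain ⟨a, rest, hK⟩ := List.exists_cons_of_ne_nil
    (List.ne_nil_of_length_pos (show 0 < (K.rotate ρ).length by
      simpa [← hs] using List.length_pos_of_mem hf))
  set t := (s.rotate ρ).dropLast
  have hst : s.rotate ρ = t ++ [false] := (List.dropLast_append_getLast? _ hlast).symm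
  have hlen : t.length = rest.length := by
    have h1 := congrArg List.length hst
    have h2 := congrArg List.length hK
    simp only [List.length_rotate, List.length_append, List.length_nil,
      List.length_cons] at h1 h2
    omega
  rw [← cutSum_rotate G K hs ρ, hK, hst, cutSum_cons_append_false G a hlen,
    cycMerge_eq_openMerge, hK, hst, ← (List.rotate_perm s ρ).count_eq, hst]
  simp [openMerge, List.zip_append_of_length_eq _ hlen]

end Cyclic

theorem Ssum_eq_sum (K : List ℕ) (m : ℕ) (f : List ℕ → RSp) :
    Ssum K m f = ∑ s : Fin K.length → Bool,
      if (List.ofFn s).count true = m then f (cycMerge K (List.ofFn s)) else 0 := by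
  rw [Ssum, ← Finsupp.linearCombination_apply, SmDef, map_sum]
  refine sum_congr rfl fun s _ => ?_
  split_ifs
  · rw [Finsupp.linearCombination_single, one_smul]
  · rw [map_zero]

theorem sum_range_ite_count_true_eq_smul_cutSum {R V : Type*} [Ring R] [AddCommMonoid V]
    [Module R V] (G : List ℕ → V) (K : List ℕ) {s : List Bool} (hs : s.length = K.length) :
    ∑ m ∈ range K.length, (if s.count true = m then
        (-1 : R) ^ m • ∑ i ∈ Icc 1 (K.length - m), G ((cycMerge K s).rotate i) else 0)
      = (-1 : R) ^ s.count true • cutSum G K s := by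
  rw [sum_ite_eq]
  have hcount := List.count_true_add_count_false s
  split_ifs with hlt
  · have hf : false ∈ s := List.count_pos_iff.mp (by rw [mem_range] at hlt; omega)
    rw [cutSum_eq_sum_Icc_cycMerge G K hs hf, show K.length - s.count true = s.count false by omega]
  · have hnf : false ∉ s := fun hf => hlt (mem_range.mpr (by
      have := List.count_pos_iff.mpr hf; omega))
    refine (smul_eq_zero_of_right _ (sum_eq_zero fun c _ => if_neg fun h => hnf ?_)).symm
    exact (List.rotate_perm s c).subset (List.mem_of_getLast? h)

theorem sum_neg_one_pow_smul_starIdx_cons_openMerge (w : ℕ) {K : List ℕ} (hK : K ≠ []) :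
    ∑ s : Fin K.length → Bool, (if (List.ofFn s).getLast? = some false then
        (-1 : ℚ) ^ (List.ofFn s).count true • starIdx (w :: openMerge K (List.ofFn s)) else 0)
      = Finsupp.single ((w + K.headI) :: K.tail) 1 + Finsupp.single (w :: K) 1 := by
  obtain ⟨a, rest, rfl⟩ := List.exists_cons_of_ne_nil hK
  rw [List.length_cons, sum_pi_fin_snoc, Fintype.sum_bool]
  simp only [List.ofFn_snoc, List.getLast?_append, List.getLast?_singleton, Option.some_or,
    Option.some.injEq, Bool.true_eq_false, if_false, if_true, sum_const_zero, zero_add,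
    List.count_append, List.count_singleton, openMerge,
    List.zip_append_of_length_eq _ List.length_ofFn]
  simpa using sum_neg_one_pow_smul_starIdx_cons_mergeP w a rest

theorem sum_neg_one_pow_smul_starIdx_cons_openMerge_rotate (w : ℕ) {K : List ℕ} {c : ℕ}
    (hc : c < K.length) :
    ∑ s : Fin K.length → Bool, (if ((List.ofFn s).rotate c).getLast? = some false then
        (-1 : ℚ) ^ (List.ofFn s).count true •
          starIdx (w :: openMerge (K.rotate c) ((List.ofFn s).rotate c)) else 0)
      = Finsupp.single ((w + (K.rotate c).headI) :: (K.rotate c).tail) 1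
          + Finsupp.single (w :: K.rotate c) 1 := by
  have h := sum_neg_one_pow_smul_starIdx_cons_openMerge w
    (List.ne_nil_of_length_pos (show 0 < (K.rotate c).length by simp; omega))
  rw [List.length_rotate] at h
  obtain ⟨e, he, hrot⟩ := exists_bijective_ofFn_rotate (α := Bool) K.length c
  rw [← h]
  conv_rhs => rw [← he.sum_comp]
  simp only [hrot, (List.rotate_perm _ c).count_eq]

theorem prop1_cyclic_general (K : List ℕ) (j : ℕ) :
    (∑ i ∈ Finset.range K.length,
        (Finsupp.single ((j + 1 + (K.rotate i).headI) :: (K.rotate i).tail) (1 : ℚ)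
          + Finsupp.single ((j + 1) :: K.rotate i) (1 : ℚ)))
      = ∑ m ∈ Finset.range K.length, (-1 : ℚ) ^ m •
          ∑ i ∈ Finset.Icc 1 (K.length - m),
            Ssum K m fun l => starIdx ((j + 1) :: l.rotate i) := by
  set G : List ℕ → RSp := fun l => starIdx ((j + 1) :: l)
  calc _ = ∑ c ∈ range K.length, ∑ s : Fin K.length → Bool,
        (if ((List.ofFn s).rotate c).getLast? = some false then
          (-1 : ℚ) ^ (List.ofFn s).count true •
            G (openMerge (K.rotate c) ((List.ofFn s).rotate c)) else 0) :=
        sum_congr rfl fun c hc =>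
          (sum_neg_one_pow_smul_starIdx_cons_openMerge_rotate (j + 1) (mem_range.mp hc)).symm
    _ = ∑ s : Fin K.length → Bool,
          (-1 : ℚ) ^ (List.ofFn s).count true • cutSum G K (List.ofFn s) := by
        rw [sum_comm]
        simp only [cutSum, smul_sum, smul_ite, smul_zero]
    _ = _ := by
        simp only [← sum_range_ite_count_true_eq_smul_cutSum G K (List.length_ofFn), Ssum_eq_sum,
          smul_sum, smul_ite, smul_zero]
        rw [sum_comm]
        refine sum_congr rfl fun m _ => ?_
        rw [sum_comm]
        simp only [sum_ite_irrel, sum_const_zero]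
        rfl

/-- **Proposition 6.4** of Hirose–Murahara–Ono: for a nonempty index `𝐤 = (k₁,…,k_r)`
and `j ≥ 0`,
`Σ_{i=1}^{r} [(j+1+k_i, k_{i+1},…,k_r, k₁,…,k_{i−1}) + (j+1, k_i, k_{i+1},…,k_r, k₁,…,k_{i−1})]
 = Σ_{m=0}^{r−1} (−1)^m Σ_{i=1}^{r−m} Σ_{(l₁,…,l_{r−m}) ∈ S_m(𝐤)}
     (j+1, l_{i+1},…,l_{r−m}, l₁,…,l_i)⋆`
holds in `ℛ`. -/
theorem prop1_cyclic (K : List ℕ) (hne : K ≠ []) (hpos : ∀ x ∈ K, 0 < x) (j : ℕ) :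
    (∑ i ∈ Finset.range K.length,
        (Finsupp.single ((j + 1 + (K.rotate i).headI) :: (K.rotate i).tail) (1 : ℚ)
          + Finsupp.single ((j + 1) :: K.rotate i) (1 : ℚ)))
      = ∑ m ∈ Finset.range K.length, (-1 : ℚ) ^ m •
          ∑ i ∈ Finset.Icc 1 (K.length - m),
            Ssum K m fun l => starIdx ((j + 1) :: l.rotate i) :=
  prop1_cyclic_general K j
end

section
/- Let 𝐤=(k₁,…,k_r) be a nonempty index of weight k. Then the following identity holds in 𝔥[[t]]: k·w⋆_Ŝ(k+1) = k·w⋆(k+1) + (−1)^{k+1} Σ_{l₁,…,l_r ≥ 0} (k+l)·(∏_{j=1}^r binom(k_j+l_j−1, l_j))·w⋆(k+l+1)·t^{l}, where l := l₁+⋯+l_r and (k+1), (k+l+1) denote depth-one indices; moreover w⋆(n) = y·x^{n−1} for every positive integer n. -/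
/-- `𝔥 = ℚ⟨x,y⟩`, realized as the monoid algebra over `ℚ` of the free monoid on two
letters; letter `0` is `x` and letter `1` is `y`. -/
abbrev H : Type := MonoidAlgebra ℚ (FreeMonoid (Fin 2))

/-- The word `u₁⋯uₙ`, as an element of `𝔥`. -/
noncomputable def word (l : List (Fin 2)) : H := MonoidAlgebra.single (FreeMonoid.ofList l) 1

/-- The letter `x ∈ 𝔥`. -/
noncomputable def xH : H := word [0]

/-- The letter `y ∈ 𝔥`. -/
noncomputable def yH : H := word [1]

/-- The shuffle product of two words, as an element of `𝔥`. -/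
noncomputable def shw : List (Fin 2) → List (Fin 2) → H
  | [], w => word w
  | a :: u, [] => word (a :: u)
  | a :: u, b :: v => word [a] * shw u (b :: v) + word [b] * shw (a :: u) v
  termination_by u v => u.length + v.length

/-- The shuffle product `⧢` on `𝔥`: the `ℚ`-bilinear extension of the shuffle product
of words. -/
noncomputable def sh (f g : H) : H :=
  Finsupp.sum f.coeff fun u c => Finsupp.sum g.coeff fun v d => (c * d) • shw u.toList v.toList

open Classical in
/-- `W(X) = Σ_f δ(f⁻¹(1))·δ(f⁻¹(2))⋯δ(f⁻¹(n)) ∈ 𝔥`, the sum ranging over all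
order-preserving bijections `f : X → {1,…,n}`, `n = #X`. -/
noncomputable def Wp (α : Type) [Fintype α] [PartialOrder α] (δ : α → Fin 2) : H :=
  ∑ f : α ≃ Fin (Fintype.card α),
    if Monotone (⇑f) then word (List.ofFn fun i => δ (f.symm i)) else 0

/-- The underlying set of the labeled poset `X⋆(𝐤)`: the disjoint union of the chains
`C_j = {c_{j,0} < ⋯ < c_{j,k_j−1}}`, `1 ≤ j ≤ r`. -/
def Carrier (K : List ℕ) : Type := (j : Fin K.length) × Fin (K.get j)

instance (K : List ℕ) : Fintype (Carrier K) :=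
  inferInstanceAs (Fintype ((j : Fin K.length) × Fin (K.get j)))

instance (K : List ℕ) : DecidableEq (Carrier K) :=
  inferInstanceAs (DecidableEq ((j : Fin K.length) × Fin (K.get j)))

/-- The partial order of `X⋆(𝐤)`: the order generated by the chain relations together
with the relations `c_{j+1,k_{j+1}−1} > c_{j,0}` (written out explicitly: one can jump
from the bottom of a chain to the top of a later chain provided all intermediate chains
are singletons). -/
def cle (K : List ℕ) (p q : (j : Fin K.length) × Fin (K.get j)) : Prop :=
  (p.1 = q.1 ∧ p.2.val ≤ q.2.val) ∨
    (p.1 < q.1 ∧ p.2.val = 0 ∧ q.2.val + 1 = K.get q.1 ∧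
      ∀ m : Fin K.length, p.1 < m → m < q.1 → K.get m = 1)

theorem sigEq {K : List ℕ} (p q : (j : Fin K.length) × Fin (K.get j))
    (h1 : p.1 = q.1) (h2 : p.2.val = q.2.val) : p = q := by
  obtain ⟨j, a⟩ := p
  obtain ⟨j', b⟩ := q
  have h1' : j = j' := h1
  subst h1'
  have h2' : a = b := Fin.ext h2
  rw [h2']

theorem cle_trans (K : List ℕ) (p q s : (j : Fin K.length) × Fin (K.get j))
    (h : cle K p q) (h' : cle K q s) : cle K p s := by
  rcases h with ⟨h1, h2⟩ | ⟨h1, h2, h3, h4⟩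
  · rcases h' with ⟨g1, g2⟩ | ⟨g1, g2, g3, g4⟩
    · exact Or.inl ⟨h1.trans g1, h2.trans g2⟩
    · exact Or.inr ⟨h1.le.trans_lt g1, by omega,
        g3, fun m hm1 hm2 => g4 m (h1.symm.le.trans_lt hm1) hm2⟩
  · rcases h' with ⟨g1, g2⟩ | ⟨g1, g2, g3, g4⟩
    · have hks : K.get q.1 = K.get s.1 := by rw [g1]
      have hlt : s.2.val < K.get s.1 := s.2.isLt
      exact Or.inr ⟨h1.trans_le g1.le, h2, by omega,
        fun m hm1 hm2 => h4 m hm1 (hm2.trans_le g1.symm.le)⟩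
    · refine Or.inr ⟨h1.trans g1, h2, g3, fun m hm1 hm2 => ?_⟩
      rcases lt_trichotomy m q.1 with hc | hc | hc
      · exact h4 m hm1 hc
      · rw [hc]; omega
      · exact g4 m hc hm2

theorem cle_antisymm (K : List ℕ) (p q : (j : Fin K.length) × Fin (K.get j))
    (h : cle K p q) (h' : cle K q p) : p = q := by
  rcases h with ⟨h1, h2⟩ | ⟨h1, h2, h3, h4⟩
  · rcases h' with ⟨g1, g2⟩ | ⟨g1, g2, g3, g4⟩
    · exact sigEq p q h1 (le_antisymm h2 g2)
    · rw [h1] at g1; exact absurd g1 (lt_irrefl _)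
  · rcases h' with ⟨g1, g2⟩ | ⟨g1, g2, g3, g4⟩
    · rw [g1] at h1; exact absurd h1 (lt_irrefl _)
    · exact absurd (h1.trans g1) (lt_irrefl _)

instance (K : List ℕ) : PartialOrder (Carrier K) where
  le := cle K
  le_refl p := Or.inl ⟨rfl, le_refl _⟩
  le_trans := cle_trans K
  le_antisymm := cle_antisymm K

/-- The label map of `X⋆(𝐤)`: the bottom element of each chain is labeled `y` (= `1`),
all other elements are labeled `x` (= `0`). -/
def lab (K : List ℕ) : Carrier K → Fin 2 := fun p => if p.2.val = 0 then 1 else 0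

/-- `w⋆(𝐤) := W(X⋆(𝐤))`, with `w⋆(∅) = 1`. -/
noncomputable def wstar (K : List ℕ) : H := Wp (Carrier K) (lab K)

/-- The coefficientwise shuffle product on `𝔥[[t]]`. -/
noncomputable def shP (f g : PowerSeries H) : PowerSeries H :=
  PowerSeries.mk fun n => ∑ p ∈ Finset.HasAntidiagonal.antidiagonal n,
    sh (PowerSeries.coeff p.1 f) (PowerSeries.coeff p.2 g)

/-- `F(𝐤) = Σ_{l₁,…,l_r ≥ 0} (∏_j (−1)^{k_j} binom(k_j+l_j−1,l_j)) ·
w⋆(k_r+l_r,…,k₁+l₁) · t^{l₁+⋯+l_r} ∈ 𝔥[[t]]`, with `F(∅) = 1`. -/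
noncomputable def Fser (K : List ℕ) : PowerSeries H :=
  PowerSeries.mk fun n => ∑ l ∈ Finset.Nat.antidiagonalTuple K.length n,
    (∏ j : Fin K.length, ((-1 : ℚ) ^ (K.get j) * ((K.get j + l j - 1).choose (l j) : ℚ))) •
      wstar ((List.ofFn fun j : Fin K.length => K.get j + l j).reverse)

/-- `w⋆_Ŝ(𝐤) = Σ_{i=0}^{r} w⋆(k₁,…,k_i) ⧢ F(k_{i+1},…,k_r) ∈ 𝔥[[t]]`. -/
noncomputable def wstarS (K : List ℕ) : PowerSeries H :=
  ∑ i ∈ Finset.range (K.length + 1),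
    shP (PowerSeries.C (wstar (K.take i))) (Fser (K.drop i))

/-!
In depth one everything is explicit. `X⋆(n)` is a chain, so `w⋆(n) = y xⁿ⁻¹`, and
`w⋆_Ŝ(k+1) = w⋆(k+1) + F(k+1)`, where the `tⁿ`-coefficient of `F(k+1)` is
`(−1)^{k+1} multichoose(k+1, n) w⋆(k+n+1)`. On the other side,
`binom(k_j+l_j−1, l_j) = multichoose(k_j, l_j)` is the `t^{l_j}`-coefficient of
`(1−t)^{−k_j}`, so the sum over `l₁+⋯+l_r = n` of their products is the `tⁿ`-coefficient
of `(1−t)^{−k}`, namely `multichoose(k, n)`. The identity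
`k·multichoose(k+1, n) = (k+n)·multichoose(k, n)` finishes the proof.
-/

theorem word_append (u v : List (Fin 2)) : word (u ++ v) = word u * word v := by
  rw [word, word, word, MonoidAlgebra.single_mul_single, one_mul]
  rfl

theorem yH_mul_xH_pow (m : ℕ) : yH * xH ^ m = word (1 :: List.replicate m 0) := by
  have hx : xH ^ m = word (List.replicate m 0) := by
    induction m with
    | zero => rfl
    | succ m ih => rw [pow_succ, ih, xH, ← word_append, ← List.replicate_succ']
  rw [hx, yH, ← word_append, List.singleton_append]

theorem sh_zero_left (g : H) : sh 0 g = 0 := by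
  rw [sh, MonoidAlgebra.coeff_zero, Finsupp.sum_zero_index]

theorem sh_zero_right (f : H) : sh f 0 = 0 := by
  simp [sh]

theorem smul_word_toList (u : FreeMonoid (Fin 2)) (c : ℚ) :
    c • word u.toList = MonoidAlgebra.single u c := by
  rw [word, FreeMonoid.ofList_toList, MonoidAlgebra.smul_single', mul_one]

theorem shw_nil_right (u : List (Fin 2)) : shw u [] = word u := by
  cases u <;> rw [shw]

theorem sh_one_left (g : H) : sh 1 g = g := by
  rw [sh, MonoidAlgebra.one_def, MonoidAlgebra.coeff_single, Finsupp.sum_single_index]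
  · simp_rw [one_mul, FreeMonoid.toList_one, shw, smul_word_toList]
    exact MonoidAlgebra.sum_coeff_single g
  · exact Finset.sum_eq_zero fun v _ => by dsimp only; rw [zero_mul, zero_smul]

theorem sh_one_right (f : H) : sh f 1 = f := by
  rw [sh, MonoidAlgebra.one_def, MonoidAlgebra.coeff_single]
  conv_lhs => enter [2, u, c]; rw [Finsupp.sum_single_index (by rw [mul_zero, zero_smul])]
  simp_rw [mul_one, FreeMonoid.toList_one, shw_nil_right, smul_word_toList]
  exact MonoidAlgebra.sum_coeff_single f

open Classical in
theorem Wp_eq_word_of_orderIso {α : Type} [Fintype α] [PartialOrder α] (δ : α → Fin 2)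
    (e : α ≃o Fin (Fintype.card α)) :
    Wp α δ = word (List.ofFn fun i => δ (e.symm i)) := by
  rw [Wp, Finset.sum_eq_single_of_mem e.toEquiv (Finset.mem_univ _)]
  · exact if_pos e.monotone
  intro g _ hg
  refine if_neg fun hmono => hg ?_
  -- `α` is linearly ordered via `e`, so `g` is an order isomorphism too,
  -- and order isomorphisms onto `Fin n` are unique
  have hg_le : ∀ a b, g a ≤ g b ↔ a ≤ b := by
    refine fun a b => ⟨fun h => ?_, fun h => hmono h⟩
    rcases le_total (e a) (e b) with hab | hba
    · exact e.le_iff_le.1 hab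
    · exact (g.injective (le_antisymm h (hmono (e.le_iff_le.1 hba)))).le
  exact congrArg RelIso.toEquiv (Subsingleton.elim (⟨g, hg_le _ _⟩ : α ≃o _) e)

instance (n : ℕ) : Subsingleton (Fin [n].length) := inferInstanceAs (Subsingleton (Fin 1))

theorem get_singleton (n : ℕ) (j : Fin [n].length) : [n].get j = n := by
  rw [Subsingleton.elim j 0]
  rfl

def chainOrderIso (n : ℕ) : Carrier [n] ≃o Fin n where
  toFun p := Fin.cast (get_singleton n p.1) p.2
  invFun i := ⟨0, i⟩
  left_inv p := sigEq _ _ (Subsingleton.elim _ _) rfl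
  right_inv i := rfl
  map_rel_iff' {p q} := by
    change p.2.val ≤ q.2.val ↔ cle [n] p q
    simp [cle, Subsingleton.elim p.1 q.1]

theorem card_carrier_singleton (n : ℕ) : Fintype.card (Carrier [n]) = n :=
  (Fintype.card_congr (chainOrderIso n).toEquiv).trans (Fintype.card_fin n)

theorem wstar_nil : wstar [] = 1 := by
  have : IsEmpty (Carrier []) := ⟨fun p => Fin.elim0 p.1⟩
  have hcard : Fintype.card (Carrier []) = 0 := Fintype.card_eq_zero
  rw [wstar, Wp_eq_word_of_orderIso _
    ((OrderIso.ofIsEmpty _ (Fin 0)).trans (Fin.castOrderIso hcard.symm))]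
  exact congrArg word (List.eq_nil_of_length_eq_zero (by rw [List.length_ofFn, hcard]))

theorem wstar_singleton (m : ℕ) : wstar [m + 1] = yH * xH ^ m := by
  rw [wstar, Wp_eq_word_of_orderIso _
    ((chainOrderIso (m + 1)).trans (Fin.castOrderIso (card_carrier_singleton (m + 1)).symm)),
    yH_mul_xH_pow]
  congr 1
  refine List.ext_getElem (by simp [card_carrier_singleton]) fun i h _ => ?_
  rw [List.getElem_ofFn]
  change (if i = 0 then (1 : Fin 2) else 0) = _
  cases i <;> simp

theorem coeff_shP_C_left (a : H) (g : PowerSeries H) (n : ℕ) :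
    PowerSeries.coeff n (shP (PowerSeries.C a) g) = sh a (PowerSeries.coeff n g) := by
  rw [shP, PowerSeries.coeff_mk, Finset.sum_eq_single_of_mem (0, n) (by simp)]
  · rw [PowerSeries.coeff_zero_C]
  rintro ⟨i, j⟩ hij hne
  have hi : i ≠ 0 := by
    rintro rfl
    exact hne (by simp_all)
  rw [PowerSeries.coeff_C, if_neg hi, sh_zero_left]

theorem Fser_nil : Fser [] = 1 := by
  refine PowerSeries.ext fun n => ?_
  rw [Fser, PowerSeries.coeff_mk, PowerSeries.coeff_one]
  cases n with
  | zero =>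
    have hl : Finset.Nat.antidiagonalTuple ([] : List ℕ).length 0 = {![]} :=
      Finset.Nat.antidiagonalTuple_zero_zero
    have : IsEmpty (Fin ([] : List ℕ).length) := inferInstanceAs (IsEmpty (Fin 0))
    rw [if_pos rfl, hl, Finset.sum_singleton, Finset.univ_eq_empty, Finset.prod_empty, one_smul]
    exact wstar_nil
  | succ n =>
    have hl : Finset.Nat.antidiagonalTuple ([] : List ℕ).length (n + 1) = ∅ :=
      Finset.Nat.antidiagonalTuple_zero_succ n
    rw [if_neg n.succ_ne_zero, hl, Finset.sum_empty]

theorem wstarS_singleton (m : ℕ) : wstarS [m] = PowerSeries.C (wstar [m]) + Fser [m] := by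
  rw [wstarS, Finset.sum_range_succ, List.take_length, List.drop_length, List.length_singleton,
    Finset.sum_range_one, List.take_zero, List.drop_zero, add_comm]
  congr 1
  · refine PowerSeries.ext fun n => ?_
    rw [coeff_shP_C_left, Fser_nil, PowerSeries.coeff_one, PowerSeries.coeff_C]
    split_ifs
    · exact sh_one_right _
    · exact sh_zero_right _
  · refine PowerSeries.ext fun n => ?_
    rw [coeff_shP_C_left, wstar_nil, sh_one_left]

theorem coeff_Fser_singleton (m n : ℕ) :
    PowerSeries.coeff n (Fser [m])
      = ((-1 : ℚ) ^ m * (m.multichoose n : ℚ)) • wstar [m + n] := by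
  have hl : Finset.Nat.antidiagonalTuple [m].length n = {![n]} :=
    Finset.Nat.antidiagonalTuple_one n
  rw [Fser, PowerSeries.coeff_mk, hl, Finset.sum_singleton, Fintype.prod_subsingleton _ 0,
    Nat.multichoose_eq]
  rfl

section Multichoose

open PowerSeries

theorem PowerSeries.coeff_invOneSubPow {S : Type*} [CommRing S] (d m : ℕ) :
    coeff m (invOneSubPow S d : S⟦X⟧) = d.multichoose m := by
  cases d with
  | zero =>
    rw [invOneSubPow_zero, Units.val_one, coeff_one]
    cases m <;> simp [Nat.multichoose_zero_right, Nat.multichoose_zero_succ]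
  | succ d =>
    rw [invOneSubPow_val_succ_eq_mk_add_choose, coeff_mk, Nat.multichoose_eq,
      Nat.add_right_comm, Nat.add_sub_cancel, Nat.choose_symm_add]

theorem PowerSeries.prod_invOneSubPow {S ι : Type*} [CommRing S] (s : Finset ι) (a : ι → ℕ) :
    ∏ j ∈ s, invOneSubPow S (a j) = invOneSubPow S (∑ j ∈ s, a j) := by
  simp_rw [invOneSubPow_eq_inv_one_sub_pow, Finset.prod_pow_eq_pow_sum]

theorem Finset.sum_finsuppAntidiag_eq_sum_antidiagonalTuple {M : Type*} [AddCommMonoid M]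
    {r : ℕ} (n : ℕ) (f : (Fin r → ℕ) → M) :
    ∑ l ∈ finsuppAntidiag univ n, f l = ∑ l ∈ Nat.antidiagonalTuple r n, f l := by
  rw [finsuppAntidiag, sum_map, ← piAntidiag_univ_fin_eq_antidiagonalTuple]
  exact sum_attach _ f

theorem Nat.sum_antidiagonalTuple_prod_multichoose {r : ℕ} (a : Fin r → ℕ) (n : ℕ) :
    ∑ l ∈ Finset.Nat.antidiagonalTuple r n, ∏ j, (a j).multichoose (l j)
      = (∑ j, a j).multichoose n := by
  have h := congrArg (fun u : ℚ⟦X⟧ˣ => coeff n (u : ℚ⟦X⟧)) (prod_invOneSubPow .univ a)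
  simp only [Units.coe_prod, coeff_prod, coeff_invOneSubPow] at h
  rw [Finset.sum_finsuppAntidiag_eq_sum_antidiagonalTuple n
    (fun l => ∏ j, ((a j).multichoose (l j) : ℚ))] at h
  exact_mod_cast h

theorem Nat.mul_succ_multichoose (m n : ℕ) :
    m * (m + 1).multichoose n = (m + n) * m.multichoose n := by
  cases m with
  | zero => cases n <;> simp [Nat.multichoose_zero_succ]
  | succ p =>
    rw [Nat.multichoose_eq, Nat.multichoose_eq, show p + 1 + 1 + n - 1 = p + 1 + n by omega,
      show p + 1 + n - 1 = p + n by omega]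
    have h := Nat.add_one_mul_choose_eq (p + n) p
    rw [Nat.choose_symm_add, Nat.add_right_comm, Nat.choose_symm_add] at h
    rw [h, mul_comm]

end Multichoose

theorem List.sum_antidiagonalTuple_prod_choose (K : List ℕ) (n : ℕ) :
    ∑ l ∈ Finset.Nat.antidiagonalTuple K.length n, ∏ j, (K.get j + l j - 1).choose (l j)
      = K.sum.multichoose n := by
  simp_rw [← Nat.multichoose_eq, Nat.sum_antidiagonalTuple_prod_multichoose, List.get_eq_getElem,
    Fin.sum_univ_getElem]

theorem k_smul_wstarS_depth_one_general (K : List ℕ) (k : ℕ) (hw : K.sum = k) :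
    ((k : ℚ) • wstarS [k + 1]
        = PowerSeries.C ((k : ℚ) • wstar [k + 1])
          + PowerSeries.mk (fun n =>
              ∑ l ∈ Finset.Nat.antidiagonalTuple K.length n,
                ((-1 : ℚ) ^ (k + 1) * ((k + n : ℕ) : ℚ) *
                    ∏ j : Fin K.length, ((K.get j + l j - 1).choose (l j) : ℚ)) •
                  wstar [k + n + 1]))
      ∧ ∀ n : ℕ, 0 < n → wstar [n] = yH * xH ^ (n - 1) := by
  refine ⟨PowerSeries.ext fun n => ?_, fun n hn => ?_⟩
  · have hsum : ∑ l ∈ Finset.Nat.antidiagonalTuple K.length n,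
        ∏ j, ((K.get j + l j - 1).choose (l j) : ℚ) = k.multichoose n := by
      exact_mod_cast hw ▸ K.sum_antidiagonalTuple_prod_choose n
    have hmul : (k : ℚ) * (k + 1).multichoose n = (k + n : ℕ) * k.multichoose n := by
      exact_mod_cast Nat.mul_succ_multichoose k n
    rw [PowerSeries.coeff_smul, wstarS_singleton, map_add, coeff_Fser_singleton, smul_add,
      smul_smul, map_add, PowerSeries.coeff_mk, ← Finset.sum_smul, ← Finset.mul_sum, hsum,
      PowerSeries.coeff_C, PowerSeries.coeff_C, smul_ite, smul_zero, Nat.add_right_comm k 1 n]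
    congr 2
    linear_combination (-1 : ℚ) ^ (k + 1) * hmul
  · obtain ⟨m, rfl⟩ := Nat.exists_eq_add_of_lt hn
    simpa using wstar_singleton m

/-- The computation finishing the proof of Theorem 2.6 in Hirose–Murahara–Ono: for a
nonempty index `𝐤 = (k₁,…,k_r)` of weight `k`,
`k·w⋆_Ŝ(k+1) = k·w⋆(k+1) + (−1)^{k+1} Σ_{l₁,…,l_r ≥ 0}
  (k+l)·(∏_{j=1}^r binom(k_j+l_j−1,l_j))·w⋆(k+l+1)·t^l` in `𝔥[[t]]`, where
`l = l₁+⋯+l_r`; moreover `w⋆(n) = y·x^{n−1}` for every positive integer `n`. -/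
theorem k_smul_wstarS_depth_one (K : List ℕ) (hne : K ≠ []) (hpos : ∀ n ∈ K, 0 < n)
    (k : ℕ) (hw : K.sum = k) :
    ((k : ℚ) • wstarS [k + 1]
        = PowerSeries.C ((k : ℚ) • wstar [k + 1])
          + PowerSeries.mk (fun n =>
              ∑ l ∈ Finset.Nat.antidiagonalTuple K.length n,
                ((-1 : ℚ) ^ (k + 1) * ((k + n : ℕ) : ℚ) *
                    ∏ j : Fin K.length, ((K.get j + l j - 1).choose (l j) : ℚ)) •
                  wstar [k + n + 1]))
      ∧ ∀ n : ℕ, 0 < n → wstar [n] = yH * xH ^ (n - 1) :=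
  k_smul_wstarS_depth_one_general K k hw
end
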